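/- arXiv:1308.2302 — 2 statements merged into one kernel-verified Lean document; each statement's English description precedes it below -/
import Mathlib

section
/- Let c ∈ ℝ^L, Γ a positive definite L×L real matrix, A a real D×L matrix, b ∈ ℝ^D, and Σ a positive definite D×D real matrix. Set m = [c; A c + b] and V = [[Γ, ΓAᵀ], [AΓ, Σ + AΓAᵀ]]. Then for all x ∈ ℝ^L and y ∈ ℝ^D, writing u = [x; y], we have (u − m)ᵀ V⁻¹ (u − m) = (x − c)ᵀ Γ⁻¹ (x − c) + (y − A x − b)ᵀ Σ⁻¹ (y − A x − b). -/
open Matrix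

/-!
With `P = [[1, 0], [-A, 1]]`, block Gaussian elimination gives
`P V Pᵀ = diag(Γ, Σ)`, so `V⁻¹ = Pᵀ diag(Γ⁻¹, Σ⁻¹) P`. Hence the quadratic form of `V⁻¹` at
`u - m` is the block-diagonal form at `P (u - m) = [x - c; y - A x - b]`, which splits into the
two terms on the right.
-/

namespace Matrix

variable {l m R : Type*} [Fintype l] [Fintype m]

theorem dotProduct_transpose_mul_mul_mulVec [CommSemiring R] (P : Matrix m l R)
    (M : Matrix m m R) (u : l → R) :
    u ⬝ᵥ (Pᵀ * M * P) *ᵥ u = (P *ᵥ u) ⬝ᵥ M *ᵥ (P *ᵥ u) := by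
  rw [← mulVec_mulVec, ← mulVec_mulVec, dotProduct_mulVec, vecMul_transpose]

theorem sumElim_dotProduct_fromBlocks_zero_zero_mulVec [NonUnitalNonAssocSemiring R]
    (M : Matrix l l R) (N : Matrix m m R) (u : l → R) (v : m → R) :
    Sum.elim u v ⬝ᵥ fromBlocks M 0 0 N *ᵥ Sum.elim u v = u ⬝ᵥ M *ᵥ u + v ⬝ᵥ N *ᵥ v := by
  simp [fromBlocks_mulVec, sumElim_dotProduct_sumElim]

variable [DecidableEq l] [DecidableEq m]

theorem fromBlocks_one_zero_neg_one_mulVec [Ring R] (A : Matrix m l R) (u : l → R)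
    (v : m → R) :
    fromBlocks 1 0 (-A) 1 *ᵥ Sum.elim u v = Sum.elim u (v - A *ᵥ u) := by
  simp [fromBlocks_mulVec, neg_mulVec, sub_eq_neg_add]

theorem inv_fromBlocks_joint_covariance [CommRing R] (Γ : Matrix l l R) (A : Matrix m l R)
    (S : Matrix m m R) (hΓ : IsUnit Γ.det) (hS : IsUnit S.det) :
    (fromBlocks Γ (Γ * Aᵀ) (A * Γ) (S + A * Γ * Aᵀ))⁻¹ =
      (fromBlocks 1 0 (-A) 1)ᵀ * fromBlocks Γ⁻¹ 0 0 S⁻¹ * fromBlocks 1 0 (-A) 1 := by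
  have eliminate : fromBlocks 1 0 (-A) 1 * fromBlocks Γ (Γ * Aᵀ) (A * Γ) (S + A * Γ * Aᵀ) =
      fromBlocks Γ (Γ * Aᵀ) 0 S := by
    simp [fromBlocks_multiply, Matrix.mul_assoc]
  have normalize : fromBlocks Γ⁻¹ 0 0 S⁻¹ * fromBlocks Γ (Γ * Aᵀ) 0 S = fromBlocks 1 Aᵀ 0 1 := by
    simp [fromBlocks_multiply, ← Matrix.mul_assoc, nonsing_inv_mul _ hΓ, nonsing_inv_mul _ hS]
  refine inv_eq_left_inv ?_
  rw [Matrix.mul_assoc, Matrix.mul_assoc, eliminate, normalize]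
  simp [fromBlocks_transpose, fromBlocks_multiply]

end Matrix

theorem gllim_joint_quadratic_decomposition_general {L D : ℕ}
    (c : Fin L → ℝ) (Γ : Matrix (Fin L) (Fin L) ℝ)
    (A : Matrix (Fin D) (Fin L) ℝ) (b : Fin D → ℝ)
    (S : Matrix (Fin D) (Fin D) ℝ)
    (hΓ : Γ.PosDef) (hS : S.PosDef)
    (x : Fin L → ℝ) (y : Fin D → ℝ) :
    (Sum.elim x y - Sum.elim c (A *ᵥ c + b)) ⬝ᵥ
        (Matrix.fromBlocks Γ (Γ * Aᵀ) (A * Γ) (S + A * Γ * Aᵀ))⁻¹ *ᵥ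
        (Sum.elim x y - Sum.elim c (A *ᵥ c + b)) =
      (x - c) ⬝ᵥ Γ⁻¹ *ᵥ (x - c) +
        (y - A *ᵥ x - b) ⬝ᵥ S⁻¹ *ᵥ (y - A *ᵥ x - b) := by
  have residual : Sum.elim x y - Sum.elim c (A *ᵥ c + b) =
      Sum.elim (x - c) (y - (A *ᵥ c + b)) := by
    ext (i | j) <;> rfl
  have centred : y - (A *ᵥ c + b) - A *ᵥ (x - c) = y - A *ᵥ x - b := by
    rw [mulVec_sub]; abel
  rw [inv_fromBlocks_joint_covariance Γ A S ((isUnit_iff_isUnit_det Γ).mp hΓ.isUnit)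
      ((isUnit_iff_isUnit_det S).mp hS.isUnit),
    dotProduct_transpose_mul_mul_mulVec, residual, fromBlocks_one_zero_neg_one_mulVec, centred,
    sumElim_dotProduct_fromBlocks_zero_zero_mulVec]

/-- Quadratic-form decomposition behind the Proposition of Appendix A: with
`m = [c; Ac + b]` and `V = [[Γ, ΓAᵀ], [AΓ, Σ + AΓAᵀ]]`, for `u = [x; y]`,
`(u − m)ᵀ V⁻¹ (u − m) = (x − c)ᵀ Γ⁻¹ (x − c) + (y − Ax − b)ᵀ Σ⁻¹ (y − Ax − b)`. -/
theorem gllim_joint_quadratic_decomposition {L D : ℕ} (hL : 0 < L) (hD : 0 < D)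
    (c : Fin L → ℝ) (Γ : Matrix (Fin L) (Fin L) ℝ)
    (A : Matrix (Fin D) (Fin L) ℝ) (b : Fin D → ℝ)
    (S : Matrix (Fin D) (Fin D) ℝ)
    (hΓ : Γ.PosDef) (hS : S.PosDef)
    (x : Fin L → ℝ) (y : Fin D → ℝ) :
    (Sum.elim x y - Sum.elim c (A *ᵥ c + b)) ⬝ᵥ
        (Matrix.fromBlocks Γ (Γ * Aᵀ) (A * Γ) (S + A * Γ * Aᵀ))⁻¹ *ᵥ
        (Sum.elim x y - Sum.elim c (A *ᵥ c + b)) =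
      (x - c) ⬝ᵥ Γ⁻¹ *ᵥ (x - c) +
        (y - A *ᵥ x - b) ⬝ᵥ S⁻¹ *ᵥ (y - A *ᵥ x - b) :=
  gllim_joint_quadratic_decomposition_general c Γ A b S hΓ hS x y
end

section
/- Let c ∈ ℝ^L, Γ a positive definite L×L real matrix, A a real D×L matrix, b ∈ ℝ^D, and Σ a positive definite D×D real matrix. Define the forward parameters c* = A c + b, Γ* = Σ + AΓAᵀ, Σ* = (Γ⁻¹ + AᵀΣ⁻¹A)⁻¹, A* = Σ* Aᵀ Σ⁻¹, b* = Σ*(Γ⁻¹ c − AᵀΣ⁻¹ b), and set m = [c; c*] and V = [[Γ, ΓAᵀ], [AΓ, Γ*]]. Then for all x ∈ ℝ^L and y ∈ ℝ^D, writing u = [x; y], (u − m)ᵀ V⁻¹ (u − m) = (y − c*)ᵀ (Γ*)⁻¹ (y − c*) + (x − A* y − b*)ᵀ (Σ*)⁻¹ (x − A* y − b*). -/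
open Matrix

/-- Forward quadratic-form decomposition: with `c* = Ac + b`, `Γ* = Σ + AΓAᵀ`,
`Σ* = (Γ⁻¹ + AᵀΣ⁻¹A)⁻¹`, `A* = Σ*AᵀΣ⁻¹`, `b* = Σ*(Γ⁻¹c − AᵀΣ⁻¹b)`,
`m = [c; c*]` and `V = [[Γ, ΓAᵀ], [AΓ, Γ*]]`, for `u = [x; y]`,
`(u − m)ᵀ V⁻¹ (u − m) = (y − c*)ᵀ(Γ*)⁻¹(y − c*) + (x − A*y − b*)ᵀ(Σ*)⁻¹(x − A*y − b*)`. -/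
theorem gllim_forward_quadratic_decomposition {L D : ℕ} (hL : 0 < L)
    (hD : 0 < D) (c : Fin L → ℝ) (Γ : Matrix (Fin L) (Fin L) ℝ)
    (A : Matrix (Fin D) (Fin L) ℝ) (b : Fin D → ℝ)
    (S : Matrix (Fin D) (Fin D) ℝ)
    (hΓ : Γ.PosDef) (hS : S.PosDef)
    (x : Fin L → ℝ) (y : Fin D → ℝ) :
    (Sum.elim x y - Sum.elim c (A *ᵥ c + b)) ⬝ᵥ
        (Matrix.fromBlocks Γ (Γ * Aᵀ) (A * Γ) (S + A * Γ * Aᵀ))⁻¹ *ᵥ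
        (Sum.elim x y - Sum.elim c (A *ᵥ c + b)) =
      (y - (A *ᵥ c + b)) ⬝ᵥ (S + A * Γ * Aᵀ)⁻¹ *ᵥ (y - (A *ᵥ c + b)) +
        (x - ((Γ⁻¹ + Aᵀ * S⁻¹ * A)⁻¹ * (Aᵀ * S⁻¹)) *ᵥ y -
            (Γ⁻¹ + Aᵀ * S⁻¹ * A)⁻¹ *ᵥ (Γ⁻¹ *ᵥ c - (Aᵀ * S⁻¹) *ᵥ b)) ⬝ᵥ
          ((Γ⁻¹ + Aᵀ * S⁻¹ * A)⁻¹)⁻¹ *ᵥ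
          (x - ((Γ⁻¹ + Aᵀ * S⁻¹ * A)⁻¹ * (Aᵀ * S⁻¹)) *ᵥ y -
            (Γ⁻¹ + Aᵀ * S⁻¹ * A)⁻¹ *ᵥ (Γ⁻¹ *ᵥ c - (Aᵀ * S⁻¹) *ᵥ b)) := by
  set T : Matrix (Fin L) (Fin L) ℝ := Γ⁻¹ + Aᵀ * S⁻¹ * A with hTdef
  -- positive definiteness facts
  have hSi : (S⁻¹).PosDef := hS.inv
  have hΓi : (Γ⁻¹).PosDef := hΓ.inv
  have hTpd : T.PosDef := by
    rw [hTdef]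
    exact hΓi.add_posSemidef
      (by simpa [conjTranspose_eq_transpose_of_trivial] using
        hSi.posSemidef.conjTranspose_mul_mul_same A)
  have hGpd : (S + A * Γ * Aᵀ).PosDef :=
    hS.add_posSemidef
      (by simpa [conjTranspose_eq_transpose_of_trivial] using
        hΓ.posSemidef.mul_mul_conjTranspose_same A)
  -- determinant units and inverse identities
  have hΓd : IsUnit Γ.det := (Matrix.isUnit_iff_isUnit_det Γ).mp hΓ.isUnit
  have hSd : IsUnit S.det := (Matrix.isUnit_iff_isUnit_det S).mp hS.isUnit
  have hTd : IsUnit T.det := (Matrix.isUnit_iff_isUnit_det T).mp hTpd.isUnit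
  have hΓ1 : Γ * Γ⁻¹ = 1 := mul_nonsing_inv Γ hΓd
  have hS1 : S * S⁻¹ = 1 := mul_nonsing_inv S hSd
  have hT1 : T * T⁻¹ = 1 := mul_nonsing_inv T hTd
  have hT1' : T⁻¹ * T = 1 := nonsing_inv_mul T hTd
  -- symmetry facts
  have hΓsym : Γᵀ = Γ := by
    rw [← conjTranspose_eq_transpose_of_trivial]; exact hΓ.isHermitian
  have hSsym : Sᵀ = S := by
    rw [← conjTranspose_eq_transpose_of_trivial]; exact hS.isHermitian
  have hSi_sym : (S⁻¹)ᵀ = S⁻¹ := by rw [transpose_nonsing_inv, hSsym]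
  have hTsym : Tᵀ = T := by
    rw [hTdef]
    simp [transpose_add, transpose_mul, transpose_nonsing_inv, hΓsym, hSi_sym,
      Matrix.mul_assoc]
  have hTisym : (T⁻¹)ᵀ = T⁻¹ := by rw [transpose_nonsing_inv, hTsym]
  -- block inverse of V
  have hVinv : (Matrix.fromBlocks Γ (Γ * Aᵀ) (A * Γ) (S + A * Γ * Aᵀ))⁻¹ =
      Matrix.fromBlocks T (-(Aᵀ * S⁻¹)) (-(S⁻¹ * A)) S⁻¹ := by
    apply inv_eq_right_inv
    have hSA : S * (S⁻¹ * A) = A := by rw [← Matrix.mul_assoc, hS1, Matrix.one_mul]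
    have e11 : Γ * T + (Γ * Aᵀ) * (-(S⁻¹ * A)) = 1 := by
      rw [hTdef]
      simp only [Matrix.mul_add, Matrix.mul_neg, Matrix.mul_assoc, hΓ1]
      abel
    have e12 : Γ * (-(Aᵀ * S⁻¹)) + (Γ * Aᵀ) * S⁻¹ = 0 := by
      simp only [Matrix.mul_neg, Matrix.mul_assoc]
      abel
    have e21 : (A * Γ) * T + (S + A * Γ * Aᵀ) * (-(S⁻¹ * A)) = 0 := by
      rw [hTdef]
      simp only [Matrix.mul_add, Matrix.add_mul, Matrix.mul_neg, Matrix.mul_assoc,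
        hΓ1, Matrix.mul_one, hSA]
      abel
    have e22 : (A * Γ) * (-(Aᵀ * S⁻¹)) + (S + A * Γ * Aᵀ) * S⁻¹ = 1 := by
      simp only [Matrix.mul_neg, Matrix.add_mul, Matrix.mul_assoc, hS1]
      abel
    rw [fromBlocks_multiply, e11, e12, e21, e22, fromBlocks_one]
  -- abbreviations for the centered vectors
  set p : Fin L → ℝ := x - c with hp
  set w : Fin D → ℝ := y - (A *ᵥ c + b) with hw
  have hsplit : Sum.elim x y - Sum.elim c (A *ᵥ c + b) = Sum.elim p w := by
    funext i; cases i <;> simp [hp, hw]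
  -- the second residual
  have hc : (T⁻¹ * Γ⁻¹) *ᵥ c = c - (T⁻¹ * (Aᵀ * S⁻¹) * A) *ᵥ c := by
    have h1 : (T⁻¹ * T) *ᵥ c = c := by rw [hT1', one_mulVec]
    have h2 : (T⁻¹ * T) *ᵥ c = (T⁻¹ * Γ⁻¹) *ᵥ c + (T⁻¹ * (Aᵀ * S⁻¹) * A) *ᵥ c := by
      simp only [hTdef, Matrix.mul_add, Matrix.add_mulVec, Matrix.mul_assoc]
    rw [h2] at h1
    linear_combination (norm := module) h1
  have hz : x - (T⁻¹ * (Aᵀ * S⁻¹)) *ᵥ y - T⁻¹ *ᵥ (Γ⁻¹ *ᵥ c - (Aᵀ * S⁻¹) *ᵥ b) =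
      p - (T⁻¹ * (Aᵀ * S⁻¹)) *ᵥ w := by
    simp only [hp, hw, Matrix.mulVec_sub, Matrix.mulVec_add, Matrix.mulVec_mulVec]
    rw [hc]
    module
  -- inverse of Σ*
  have hTi : (T⁻¹)⁻¹ = T := nonsing_inv_nonsing_inv T hTd
  -- Woodbury identity
  have hW : (S + A * Γ * Aᵀ)⁻¹ = S⁻¹ - S⁻¹ * A * T⁻¹ * Aᵀ * S⁻¹ := by
    have h := Matrix.add_mul_mul_inv_eq_sub (A := S) (U := A) (C := Γ) (V := Aᵀ)
      hS.isUnit hΓ.isUnit (hTdef ▸ hTpd.isUnit)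
    rw [h, ← hTdef]
  -- transpose trick for cross terms
  have hNt : (T⁻¹ * (Aᵀ * S⁻¹))ᵀ = S⁻¹ * A * T⁻¹ := by
    simp [transpose_mul, hSi_sym, hTisym, Matrix.mul_assoc]
  have key : ∀ v : Fin L → ℝ,
      ((T⁻¹ * (Aᵀ * S⁻¹)) *ᵥ w) ⬝ᵥ v = w ⬝ᵥ (S⁻¹ * A * T⁻¹) *ᵥ v := by
    intro v
    rw [← hNt, Matrix.dotProduct_mulVec, Matrix.vecMul_transpose]
  have hTN : T * (T⁻¹ * (Aᵀ * S⁻¹)) = Aᵀ * S⁻¹ := by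
    rw [← Matrix.mul_assoc, hT1, Matrix.one_mul]
  rw [hVinv, hsplit, fromBlocks_mulVec, Sum.elim_comp_inl, Sum.elim_comp_inr,
    sumElim_dotProduct_sumElim, hz, hTi, hW]
  simp only [Matrix.sub_mulVec, Matrix.mulVec_sub, Matrix.neg_mulVec,
    dotProduct_add, dotProduct_sub, dotProduct_neg,
    sub_dotProduct, Matrix.mulVec_mulVec]
  rw [hTN, key, key]
  simp only [Matrix.mulVec_mulVec, Matrix.mul_assoc, hT1', Matrix.mul_one, mul_one]
  ring
end
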